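/- arXiv:nlin/0408041 — 3 statements merged into one kernel-verified Lean document; each statement's English description precedes it below -/
import Mathlib

section
/- Let y : ℝ → ℝ be four times differentiable with y''''(x) + 5·y'(x)·y''(x) − 5·y(x)²·y''(x) − 5·y(x)·y'(x)² + y(x)⁵ = 0 for all x. Then the function x ↦ y'''(x)³ + ((3/2)·y(x)⁴ − 9·y(x)²·y'(x))·y'''(x)² + ( ((15/2)·y'(x) − 3·y(x)²)·y''(x)² + 3·(y'(x)² − 2·y(x)²·y'(x) + y(x)⁴)·y(x)·y''(x) − 7·y'(x)⁴ − (9/2)·y(x)²·y'(x)³ + 30·y(x)⁴·y'(x)² − (17/2)·y(x)⁶·y'(x) )·y'''(x) − (15/8)·y''(x)⁴ + 2·y(x)³·y''(x)³ + ((25/2)·y'(x)³ + 15·y(x)⁴·y'(x) − (117/4)·y(x)²·y'(x)² − (13/4)·y(x)⁶)·y''(x)² + (9·y(x)·y'(x)⁴ − 30·y(x)³·y'(x)³ + 36·y(x)⁵·y'(x)² − 18·y(x)⁷·y'(x) + 3·y(x)⁹)·y''(x) − (22/3)·y'(x)⁶ + (35/2)·y(x)²·y'(x)⁵ + (45/8)·y(x)⁴·y'(x)⁴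 − (157/6)·y(x)⁶·y'(x)³ + (19/4)·y(x)⁸·y'(x)² + 3·y(x)¹⁰·y'(x) − (17/24)·y(x)¹² is constant on ℝ. -/
/-!
Write `I(u, p, q, r)` for the integral evaluated at `(y, y', y'', y''')` and
`R(u, p, q, s) = s + 5pq - 5u²q - 5up² + u⁵` for the left side of the equation, `s = y''''`.
The polynomial identity `∂ᵤI·p + ∂ₚI·q + ∂_qI·r = ∂ᵣI·(R - s)` turns the chain rule into
`d/dx I = ∂ᵣI · R`, which vanishes along solutions, so `I` is constant by the mean value theorem.
-/

noncomputable def fordyGibbonsResidual (u p q s : ℝ) : ℝ :=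
  s + 5 * p * q - 5 * u ^ 2 * q - 5 * u * p ^ 2 + u ^ 5

noncomputable def cubicIntegral (u p q r : ℝ) : ℝ :=
  r ^ 3 + ((3/2) * u ^ 4 - 9 * u ^ 2 * p) * r ^ 2
    + (((15/2) * p - 3 * u ^ 2) * q ^ 2 + 3 * (p ^ 2 - 2 * u ^ 2 * p + u ^ 4) * u * q
      - 7 * p ^ 4 - (9/2) * u ^ 2 * p ^ 3 + 30 * u ^ 4 * p ^ 2 - (17/2) * u ^ 6 * p) * r
    - (15/8) * q ^ 4 + 2 * u ^ 3 * q ^ 3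
    + ((25/2) * p ^ 3 + 15 * u ^ 4 * p - (117/4) * u ^ 2 * p ^ 2 - (13/4) * u ^ 6) * q ^ 2
    + (9 * u * p ^ 4 - 30 * u ^ 3 * p ^ 3 + 36 * u ^ 5 * p ^ 2 - 18 * u ^ 7 * p + 3 * u ^ 9) * q
    - (22/3) * p ^ 6 + (35/2) * u ^ 2 * p ^ 5 + (45/8) * u ^ 4 * p ^ 4 - (157/6) * u ^ 6 * p ^ 3
    + (19/4) * u ^ 8 * p ^ 2 + 3 * u ^ 10 * p - (17/24) * u ^ 12

noncomputable def cubicIntegralDerivR (u p q r : ℝ) : ℝ :=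
  3 * r ^ 2 + 2 * ((3/2) * u ^ 4 - 9 * u ^ 2 * p) * r
    + (((15/2) * p - 3 * u ^ 2) * q ^ 2 + 3 * (p ^ 2 - 2 * u ^ 2 * p + u ^ 4) * u * q
      - 7 * p ^ 4 - (9/2) * u ^ 2 * p ^ 3 + 30 * u ^ 4 * p ^ 2 - (17/2) * u ^ 6 * p)

theorem hasDerivAt_cubicIntegral {a b c d : ℝ → ℝ} {s x : ℝ}
    (ha : HasDerivAt a (b x) x) (hb : HasDerivAt b (c x) x) (hc : HasDerivAt c (d x) x)
    (hd : HasDerivAt d s x) :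
    HasDerivAt (fun t => cubicIntegral (a t) (b t) (c t) (d t))
      (cubicIntegralDerivR (a x) (b x) (c x) (d x) *
        fordyGibbonsResidual (a x) (b x) (c x) s) x := by
  have ha' := ha.differentiableAt
  have hb' := hb.differentiableAt
  have hc' := hc.differentiableAt
  have hd' := hd.differentiableAt
  have hdiff : DifferentiableAt ℝ (fun t => cubicIntegral (a t) (b t) (c t) (d t)) x := by
    unfold cubicIntegral
    fun_prop
  refine hdiff.hasDerivAt.congr_deriv ?_
  unfold cubicIntegral
  simp (disch := fun_prop) only [deriv_fun_add, deriv_fun_sub, deriv_fun_mul, deriv_fun_pow,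
    deriv_const, ha.deriv, hb.deriv, hc.deriv, hd.deriv]
  unfold cubicIntegralDerivR fordyGibbonsResidual
  ring

theorem stmt14 (y : ℝ → ℝ)
    (hd0 : Differentiable ℝ y) (hd1 : Differentiable ℝ (deriv y))
    (hd2 : Differentiable ℝ (deriv (deriv y)))
    (hd3 : Differentiable ℝ (deriv (deriv (deriv y))))
    (hy : ∀ x : ℝ, deriv (deriv (deriv (deriv y))) x + 5 * deriv y x * deriv (deriv y) x - 5 * y x ^ 2 * deriv (deriv y) x - 5 * y x * (deriv y x) ^ 2 + y x ^ 5 = 0) :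
    ∀ x₁ x₂ : ℝ, ((deriv (deriv (deriv y)) x₁) ^ 3 + ((3/2) * y x₁ ^ 4 - 9 * y x₁ ^ 2 * (deriv y x₁)) * (deriv (deriv (deriv y)) x₁) ^ 2 + (((15/2) * (deriv y x₁) - 3 * y x₁ ^ 2) * (deriv (deriv y) x₁) ^ 2 + 3 * ((deriv y x₁) ^ 2 - 2 * y x₁ ^ 2 * (deriv y x₁) + y x₁ ^ 4) * y x₁ * (deriv (deriv y) x₁) - 7 * (deriv y x₁) ^ 4 - (9/2) * y x₁ ^ 2 * (deriv y x₁) ^ 3 + 30 * y x₁ ^ 4 * (deriv y x₁) ^ 2 - (17/2) * y x₁ ^ 6 * (deriv y x₁)) * (deriv (deriv (deriv y)) x₁) - (15/8) * (deriv (deriv y) x₁) ^ 4 + 2 * y x₁ ^ 3 * (deriv (deriv y) x₁) ^ 3 + ((25/2) * (deriv y x₁) ^ 3 + 15 * y x₁ ^ 4 * (deriv y x₁) - (117/4) * y x₁ ^ 2 * (deriv y x₁) ^ 2 - (13/4) * y x₁ ^ 6) * (deriv (deriv y) x₁) ^ 2 + (9 * y x₁ * (deriv y x₁) ^ 4 -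 30 * y x₁ ^ 3 * (deriv y x₁) ^ 3 + 36 * y x₁ ^ 5 * (deriv y x₁) ^ 2 - 18 * y x₁ ^ 7 * (deriv y x₁) + 3 * y x₁ ^ 9) * (deriv (deriv y) x₁) - (22/3) * (deriv y x₁) ^ 6 + (35/2) * y x₁ ^ 2 * (deriv y x₁) ^ 5 + (45/8) * y x₁ ^ 4 * (deriv y x₁) ^ 4 - (157/6) * y x₁ ^ 6 * (deriv y x₁) ^ 3 + (19/4) * y x₁ ^ 8 * (deriv y x₁) ^ 2 + 3 * y x₁ ^ 10 * (deriv y x₁) - (17/24) * y x₁ ^ 12) = ((deriv (deriv (deriv y)) x₂) ^ 3 + ((3/2) * y x₂ ^ 4 - 9 * y x₂ ^ 2 * (deriv y x₂)) * (deriv (deriv (deriv y)) x₂) ^ 2 + (((15/2) * (deriv y x₂) - 3 * y x₂ ^ 2) * (deriv (deriv y) x₂) ^ 2 + 3 * ((deriv y x₂) ^ 2 - 2 * y x₂ ^ 2 * (deriv y x₂) + y x₂ ^ 4) * y x₂ * (deriv (deriv y) x₂) - 7 * (deriv y x₂) ^ 4 - (9/2) * y x₂ ^ 2 * (deriv y x₂)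 ^ 3 + 30 * y x₂ ^ 4 * (deriv y x₂) ^ 2 - (17/2) * y x₂ ^ 6 * (deriv y x₂)) * (deriv (deriv (deriv y)) x₂) - (15/8) * (deriv (deriv y) x₂) ^ 4 + 2 * y x₂ ^ 3 * (deriv (deriv y) x₂) ^ 3 + ((25/2) * (deriv y x₂) ^ 3 + 15 * y x₂ ^ 4 * (deriv y x₂) - (117/4) * y x₂ ^ 2 * (deriv y x₂) ^ 2 - (13/4) * y x₂ ^ 6) * (deriv (deriv y) x₂) ^ 2 + (9 * y x₂ * (deriv y x₂) ^ 4 - 30 * y x₂ ^ 3 * (deriv y x₂) ^ 3 + 36 * y x₂ ^ 5 * (deriv y x₂) ^ 2 - 18 * y x₂ ^ 7 * (deriv y x₂) + 3 * y x₂ ^ 9) * (deriv (deriv y) x₂) - (22/3) * (deriv y x₂) ^ 6 + (35/2) * y x₂ ^ 2 * (deriv y x₂) ^ 5 + (45/8) * y x₂ ^ 4 * (deriv y x₂) ^ 4 - (157/6) * y x₂ ^ 6 * (deriv y x₂) ^ 3 + (19/4) * y x₂ ^ 8 * (deriv y x₂) ^ 2 + 3 * y x₂ ^ 10 * (deriv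 y x₂) - (17/24) * y x₂ ^ 12) := by
  intro x₁ x₂
  have hI : ∀ x, HasDerivAt (fun t => cubicIntegral (y t) (deriv y t) (deriv (deriv y) t)
      (deriv (deriv (deriv y)) t)) 0 x := fun x => by
    have h := hasDerivAt_cubicIntegral (hd0 x).hasDerivAt (hd1 x).hasDerivAt
      (hd2 x).hasDerivAt (hd3 x).hasDerivAt
    rwa [show fordyGibbonsResidual _ _ _ _ = 0 from hy x, mul_zero] at h
  exact is_const_of_deriv_eq_zero (fun x => (hI x).differentiableAt) (fun x => (hI x).deriv) x₁ x₂
end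

section
/- Let y : ℝ → ℝ be four times differentiable with y(x) ≠ 0 for all x, and suppose y''''(x) − 4·y'(x)·y'''(x)/y(x) + (21/2)·y'(x)²·y''(x)/y(x)² − 3·y''(x)²/y(x) − (9/2)·y'(x)⁴/y(x)³ = 0 for all x. Then the function x ↦ y'''(x)²/y(x)² − 6·y'(x)·y''(x)·y'''(x)/y(x)³ + 3·y'(x)³·y'''(x)/y(x)⁴ + 9·y'(x)²·y''(x)²/y(x)⁴ − 9·y'(x)⁴·y''(x)/y(x)⁵ + (9/4)·y'(x)⁶/y(x)⁶ is constant on ℝ. -/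
/-! Along any curve, the derivative of `I(y, y', y'', y''')` is `∂I/∂y'''` times the left-hand side
of the equation, an identity of rational functions; so `I` is constant along solutions. -/

noncomputable section

/-- The left-hand side of the equation, with `a, b, c, d, e` standing for `y, y', y'', y''', y''''`. -/
def odeLHS (a b c d e : ℝ) : ℝ :=
  e - 4 * b * d / a + (21/2) * b ^ 2 * c / a ^ 2 - 3 * c ^ 2 / a - (9/2) * b ^ 4 / a ^ 3

def firstIntegral (a b c d : ℝ) : ℝ :=
  d ^ 2 / a ^ 2 - 6 * b * c * d / a ^ 3 + 3 * b ^ 3 * d / a ^ 4 + 9 * b ^ 2 * c ^ 2 / a ^ 4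
    - 9 * b ^ 4 * c / a ^ 5 + (9/4) * b ^ 6 / a ^ 6

end

theorem hasDerivAt_firstIntegral {u₀ u₁ u₂ u₃ : ℝ → ℝ} {e x : ℝ}
    (h₀ : HasDerivAt u₀ (u₁ x) x) (h₁ : HasDerivAt u₁ (u₂ x) x)
    (h₂ : HasDerivAt u₂ (u₃ x) x) (h₃ : HasDerivAt u₃ e x) (hu₀ : u₀ x ≠ 0) :
    HasDerivAt (fun t => firstIntegral (u₀ t) (u₁ t) (u₂ t) (u₃ t))
      ((2 * u₃ x / u₀ x ^ 2 - 6 * u₁ x * u₂ x / u₀ x ^ 3 + 3 * u₁ x ^ 3 / u₀ x ^ 4) *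
        odeLHS (u₀ x) (u₁ x) (u₂ x) (u₃ x) e) x := by
  have hpow (n : ℕ) : u₀ x ^ n ≠ 0 := pow_ne_zero n hu₀
  have H := (((((((h₃.pow 2).div (h₀.pow 2) (hpow 2)).sub
      ((((h₁.const_mul 6).mul h₂).mul h₃).div (h₀.pow 3) (hpow 3))).add
      ((((h₁.pow 3).const_mul 3).mul h₃).div (h₀.pow 4) (hpow 4))).add
      ((((h₁.pow 2).const_mul 9).mul (h₂.pow 2)).div (h₀.pow 4) (hpow 4))).sub
      ((((h₁.pow 4).const_mul 9).mul h₂).div (h₀.pow 5) (hpow 5))).add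
      (((h₁.pow 6).const_mul (9/4)).div (h₀.pow 6) (hpow 6)))
  refine H.congr_deriv ?_
  simp only [odeLHS, Pi.pow_apply, Pi.mul_apply]
  field_simp
  ring

theorem stmt17 (y : ℝ → ℝ)
    (hne : ∀ x : ℝ, y x ≠ 0)
    (hd0 : Differentiable ℝ y) (hd1 : Differentiable ℝ (deriv y))
    (hd2 : Differentiable ℝ (deriv (deriv y)))
    (hd3 : Differentiable ℝ (deriv (deriv (deriv y))))
    (hy : ∀ x : ℝ, deriv (deriv (deriv (deriv y))) x - 4 * deriv y x * deriv (deriv (deriv y)) x / y x + (21/2) * (deriv y x) ^ 2 * deriv (deriv y) x / y x ^ 2 - 3 * (deriv (deriv y) x) ^ 2 / y x - (9/2) * (deriv y x) ^ 4 / y x ^ 3 = 0) :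
    ∀ x₁ x₂ : ℝ, ((deriv (deriv (deriv y)) x₁) ^ 2 / y x₁ ^ 2 - 6 * deriv y x₁ * deriv (deriv y) x₁ * deriv (deriv (deriv y)) x₁ / y x₁ ^ 3 + 3 * (deriv y x₁) ^ 3 * deriv (deriv (deriv y)) x₁ / y x₁ ^ 4 + 9 * (deriv y x₁) ^ 2 * (deriv (deriv y) x₁) ^ 2 / y x₁ ^ 4 - 9 * (deriv y x₁) ^ 4 * deriv (deriv y) x₁ / y x₁ ^ 5 + (9/4) * (deriv y x₁) ^ 6 / y x₁ ^ 6) = ((deriv (deriv (deriv y)) x₂) ^ 2 / y x₂ ^ 2 - 6 * deriv y x₂ * deriv (deriv y) x₂ * deriv (deriv (deriv y)) x₂ / y x₂ ^ 3 + 3 * (deriv y x₂) ^ 3 * deriv (deriv (deriv y)) x₂ / y x₂ ^ 4 + 9 * (deriv y x₂) ^ 2 * (deriv (deriv y) x₂) ^ 2 / y x₂ ^ 4 - 9 * (deriv y x₂) ^ 4 * deriv (deriv y) x₂ / y x₂ ^ 5 + (9/4) * (deriv y x₂) ^ 6 / y x₂ ^ 6) := by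
  have hI (x : ℝ) : HasDerivAt
      (fun t => firstIntegral (y t) (deriv y t) (deriv (deriv y) t) (deriv (deriv (deriv y)) t)) 0 x := by
    have h := hasDerivAt_firstIntegral (hd0 x).hasDerivAt (hd1 x).hasDerivAt
      (hd2 x).hasDerivAt (hd3 x).hasDerivAt (hne x)
    rwa [odeLHS, hy x, mul_zero] at h
  exact is_const_of_deriv_eq_zero (fun x => (hI x).differentiableAt) (fun x => (hI x).deriv)
end

section
/- Let β, μ ∈ ℝ and let y : ℝ → ℝ be four times differentiable with y(x) ≠ 0 for all x, satisfying y''''(x) − 2·y'''(x)·y'(x)/y(x) − (3/2)·y''(x)²/y(x) + 2·y''(x)·y'(x)²/y(x)² − 5·y(x)²·y''(x) − (5/2)·y(x)·y'(x)² + (5/2)·y(x)⁵ − β·y(x)³ + μ·y(x) = 0 for all x. Then the function x ↦ y'''(x)²/y(x)² − 2·y'(x)·y''(x)·y'''(x)/y(x)³ − 8·y'''(x)·y'(x) − (1/3)·y''(x)³/y(x)³ + y'(x)²·y''(x)²/y(x)⁴ + 11·y'(x)²·y''(x)/y(x) − y''(x)² + 5·y(x)³·y''(x) + 10·y(x)²·y'(x)²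 − (10/3)·y(x)⁶ + 2·μ·y''(x)/y(x) − 4·μ·y(x)² − 2·β·y(x)·y''(x) + 2·β·y'(x)² + 2·β·y(x)⁴ is constant on ℝ. -/
/-!
Write `I(y, y', y'', y''')` for the first integral and `E(y, …, y'''')` for the left-hand side of
the equation. The chain rule gives `d/dx I = ∂I/∂y''' · E` identically: the terms of `d/dx I` free
of `y''''` are exactly `∂I/∂y'''` times the part of `E` free of `y''''`. Hence `I` has zero
derivative along every nonvanishing solution, so it is constant.
-/

noncomputable section

namespace HigherPainleve

variable (β μ : ℝ)

def firstIntegral (a b c d : ℝ) : ℝ :=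
  d ^ 2 / a ^ 2 - 2 * b * c * d / a ^ 3 - 8 * d * b - (1/3) * c ^ 3 / a ^ 3
    + b ^ 2 * c ^ 2 / a ^ 4 + 11 * b ^ 2 * c / a - c ^ 2 + 5 * a ^ 3 * c + 10 * a ^ 2 * b ^ 2
    - (10/3) * a ^ 6 + 2 * μ * c / a - 4 * μ * a ^ 2 - 2 * β * a * c + 2 * β * b ^ 2
    + 2 * β * a ^ 4

def equationLHS (a b c d e : ℝ) : ℝ :=
  e - 2 * d * b / a - (3/2) * c ^ 2 / a + 2 * c * b ^ 2 / a ^ 2 - 5 * a ^ 2 * c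
    - (5/2) * a * b ^ 2 + (5/2) * a ^ 5 - β * a ^ 3 + μ * a

theorem hasDerivAt_firstIntegral {u₀ u₁ u₂ u₃ : ℝ → ℝ} {x e : ℝ}
    (h₀ : HasDerivAt u₀ (u₁ x) x) (h₁ : HasDerivAt u₁ (u₂ x) x) (h₂ : HasDerivAt u₂ (u₃ x) x)
    (h₃ : HasDerivAt u₃ e x) (hx : u₀ x ≠ 0) :
    HasDerivAt (fun t => firstIntegral β μ (u₀ t) (u₁ t) (u₂ t) (u₃ t))
      ((2 * u₃ x / u₀ x ^ 2 - 2 * u₁ x * u₂ x / u₀ x ^ 3 - 8 * u₁ x) *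
        equationLHS β μ (u₀ x) (u₁ x) (u₂ x) (u₃ x) e) x := by
  have hp : ∀ n : ℕ, u₀ x ^ n ≠ 0 := fun n => pow_ne_zero n hx
  -- built term by term, bracketed exactly as in `firstIntegral`, so that its function is
  -- definitionally the one in the goal
  have h := (((((((((((((((h₃.pow 2).div (h₀.pow 2) (hp 2)).sub
    ((((h₁.const_mul 2).mul h₂).mul h₃).div (h₀.pow 3) (hp 3))).sub
    ((h₃.const_mul 8).mul h₁)).sub
    (((h₂.pow 3).const_mul (1/3)).div (h₀.pow 3) (hp 3))).add
    (((h₁.pow 2).mul (h₂.pow 2)).div (h₀.pow 4) (hp 4))).add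
    ((((h₁.pow 2).const_mul 11).mul h₂).div h₀ hx)).sub
    (h₂.pow 2)).add
    (((h₀.pow 3).const_mul 5).mul h₂)).add
    (((h₀.pow 2).const_mul 10).mul (h₁.pow 2))).sub
    ((h₀.pow 6).const_mul (10/3))).add
    ((h₂.const_mul (2 * μ)).div h₀ hx)).sub
    ((h₀.pow 2).const_mul (4 * μ))).sub
    ((h₀.const_mul (2 * β)).mul h₂)).add
    ((h₁.pow 2).const_mul (2 * β))).add
    ((h₀.pow 4).const_mul (2 * β))
  refine h.congr_deriv ?_
  simp only [equationLHS, Pi.pow_apply, Pi.mul_apply]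
  field_simp
  ring

end HigherPainleve

end

open HigherPainleve in
theorem stmt19 (β μ : ℝ) (y : ℝ → ℝ)
    (hne : ∀ x : ℝ, y x ≠ 0)
    (hd0 : Differentiable ℝ y) (hd1 : Differentiable ℝ (deriv y))
    (hd2 : Differentiable ℝ (deriv (deriv y)))
    (hd3 : Differentiable ℝ (deriv (deriv (deriv y))))
    (hy : ∀ x : ℝ, deriv (deriv (deriv (deriv y))) x - 2 * deriv (deriv (deriv y)) x * deriv y x / y x - (3/2) * (deriv (deriv y) x) ^ 2 / y x + 2 * deriv (deriv y) x * (deriv y x) ^ 2 / y x ^ 2 - 5 * y x ^ 2 * deriv (deriv y) x - (5/2) * y x * (deriv y x) ^ 2 + (5/2) * y x ^ 5 - β * y x ^ 3 + μ * y x = 0) :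
    ∀ x₁ x₂ : ℝ, ((deriv (deriv (deriv y)) x₁) ^ 2 / y x₁ ^ 2 - 2 * deriv y x₁ * deriv (deriv y) x₁ * deriv (deriv (deriv y)) x₁ / y x₁ ^ 3 - 8 * deriv (deriv (deriv y)) x₁ * deriv y x₁ - (1/3) * (deriv (deriv y) x₁) ^ 3 / y x₁ ^ 3 + (deriv y x₁) ^ 2 * (deriv (deriv y) x₁) ^ 2 / y x₁ ^ 4 + 11 * (deriv y x₁) ^ 2 * deriv (deriv y) x₁ / y x₁ - (deriv (deriv y) x₁) ^ 2 + 5 * y x₁ ^ 3 * deriv (deriv y) x₁ + 10 * y x₁ ^ 2 * (deriv y x₁) ^ 2 - (10/3) * y x₁ ^ 6 + 2 * μ * deriv (deriv y) x₁ / y x₁ - 4 * μ * y x₁ ^ 2 - 2 * β * y x₁ * deriv (deriv y) x₁ + 2 * β * (deriv y x₁) ^ 2 + 2 * β * y x₁ ^ 4) = ((deriv (deriv (deriv y)) x₂) ^ 2 / y x₂ ^ 2 - 2 * deriv y x₂ * deriv (deriv y) x₂ * deriv (deriv (deriv y)) x₂ / y x₂ ^ 3 - 8 * deriv (deriv (deriv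 y)) x₂ * deriv y x₂ - (1/3) * (deriv (deriv y) x₂) ^ 3 / y x₂ ^ 3 + (deriv y x₂) ^ 2 * (deriv (deriv y) x₂) ^ 2 / y x₂ ^ 4 + 11 * (deriv y x₂) ^ 2 * deriv (deriv y) x₂ / y x₂ - (deriv (deriv y) x₂) ^ 2 + 5 * y x₂ ^ 3 * deriv (deriv y) x₂ + 10 * y x₂ ^ 2 * (deriv y x₂) ^ 2 - (10/3) * y x₂ ^ 6 + 2 * μ * deriv (deriv y) x₂ / y x₂ - 4 * μ * y x₂ ^ 2 - 2 * β * y x₂ * deriv (deriv y) x₂ + 2 * β * (deriv y x₂) ^ 2 + 2 * β * y x₂ ^ 4) := by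
  have hI : ∀ x, HasDerivAt
      (fun t => firstIntegral β μ (y t) (deriv y t) (deriv (deriv y) t) (deriv (deriv (deriv y)) t))
      0 x := by
    intro x
    simpa only [show equationLHS β μ _ _ _ _ _ = 0 from hy x, mul_zero] using
      hasDerivAt_firstIntegral β μ (hd0 x).hasDerivAt (hd1 x).hasDerivAt (hd2 x).hasDerivAt
        (hd3 x).hasDerivAt (hne x)
  exact is_const_of_deriv_eq_zero (fun x => (hI x).differentiableAt) fun x => (hI x).deriv
end
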